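/- Let g be a finite-dimensional Lie算 algebra over k with dim_k g ≥ 2. Then g has a Lie subalgebra of dimension 2. -/
import Mathlib


/-- **Statement 17**: a finite-dimensional Lie algebra of dimension at least 2 over `k`
has a Lie subalgebra of dimension 2. -/
theorem exists_two_dimensional_lie_subalgebra
    (k : Type*) [Field k] [IsAlgClosed k] [CharZero k]
    (L : Type*) [LieRing L] [LieAlgebra k L] [FiniteDimensional k L]
    (h2 : 2 ≤ Module.finrank k L) :
    ∃ h : LieSubalgebra k L, Module.finrank k h = 2 := by
  have : Nontrivial L := Module.nontrivial_of_finrank_pos (R := k) (by omega)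
  obtain ⟨x, hx⟩ := exists_ne (0 : L)
  set S : Submodule k L := k ∙ x with hS
  have hcomap : S ≤ S.comap ((LieAlgebra.ad k L) x) := by
    rintro z hz
    obtain ⟨c, rfl⟩ := Submodule.mem_span_singleton.mp hz
    simp [Submodule.mem_comap, LieAlgebra.ad_apply, lie_smul, lie_self]
  set f := Submodule.mapQ S S ((LieAlgebra.ad k L) x) hcomap with hf
  have hSfin : Module.finrank k S = 1 := finrank_span_singleton hx
  have hquot := Submodule.finrank_quotient_add_finrank S
  have : Nontrivial (L ⧸ S) := Module.nontrivial_of_finrank_pos (R := k) (by omega)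
  obtain ⟨μ, hμ⟩ := Module.End.exists_eigenvalue f
  obtain ⟨q, hq⟩ := hμ.exists_hasEigenvector
  obtain ⟨y, rfl⟩ := S.mkQ_surjective q
  have hy : y ∉ S := fun h => hq.2 ((Submodule.Quotient.mk_eq_zero S).mpr h)
  have hxy : ∃ c : k, ⁅x, y⁆ = c • x + μ • y := by
    have h1 : f (S.mkQ y) = S.mkQ ⁅x, y⁆ := by
      simp [hf, Submodule.mapQ_apply, LieAlgebra.ad_apply, Submodule.mkQ_apply]
    have h2 : f (S.mkQ y) = μ • S.mkQ y := hq.apply_eq_smul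
    have h3 : ⁅x, y⁆ - μ • y ∈ S := by
      rw [← Submodule.Quotient.mk_eq_zero S]
      have : S.mkQ (⁅x, y⁆ - μ • y) = 0 := by
        rw [map_sub, map_smul, ← h1, h2, sub_self]
      simpa using this
    obtain ⟨c, hc⟩ := Submodule.mem_span_singleton.mp h3
    exact ⟨c, by rw [hc]; abel⟩
  obtain ⟨c, hc⟩ := hxy
  -- linear independence of x and y
  have hli : LinearIndependent k ![x, y] := by
    rw [LinearIndependent.pair_iff]
    intro s t hst
    have ht : t = 0 := by
      by_contra ht
      apply hy
      have h0 : t • y = (-s) • x := by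
        rw [neg_smul, eq_neg_iff_add_eq_zero, add_comm]; exact hst
      have : y = (t⁻¹ * (-s)) • x := by
        rw [mul_smul, ← h0, smul_smul, inv_mul_cancel₀ ht, one_smul]
      exact this ▸ Submodule.smul_mem _ _ (Submodule.mem_span_singleton_self x)
    subst ht
    simp only [zero_smul, add_zero, smul_eq_zero] at hst
    exact ⟨hst.resolve_right hx, rfl⟩
  -- the span of {x, y}
  set V : Submodule k L := Submodule.span k {x, y} with hV
  have hmem : ∀ z, z ∈ V ↔ ∃ a b : k, a • x + b • y = z := fun z =>
    Submodule.mem_span_pair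
  have hxV : x ∈ V := Submodule.subset_span (by simp)
  have hyV : y ∈ V := Submodule.subset_span (by simp)
  have hbV : ⁅x, y⁆ ∈ V := hc ▸ V.add_mem (V.smul_mem c hxV) (V.smul_mem μ hyV)
  refine ⟨{ toSubmodule := V, lie_mem' := ?_ }, ?_⟩
  · intro a b ha hb
    obtain ⟨a₁, a₂, rfl⟩ := (hmem a).mp ha
    obtain ⟨b₁, b₂, rfl⟩ := (hmem b).mp hb
    have : ⁅a₁ • x + a₂ • y, b₁ • x + b₂ • y⁆
        = (a₁ * b₂ - a₂ * b₁) • ⁅x, y⁆ := by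
      simp only [add_lie, lie_add, smul_lie, lie_smul, lie_self, smul_zero,
        zero_add, add_zero, ← lie_skew y x, smul_neg]
      module
    rw [this]
    exact V.smul_mem _ hbV
  · have hr : Set.range ![x, y] = {x, y} := by
      ext z; simp [Matrix.range_cons, Matrix.range_empty, or_comm]
    have h4 : Module.finrank k V = 2 := by
      rw [hV, ← hr, finrank_span_eq_card hli]
      simp
    exact h4
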